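/- For every n ≥ 1, the total half-perimeter of all generalized tree-like tableaux of size n satisfies 3·∑_{(k,l)} (k+l)·A_n(k,l) = 2·(2n+1)!!; since ∑_{(k,l)} A_n(k,l) = (2n−1)!!, the average half-perimeter of a generalized tree-like tableau of size n is (2/3)(2n+1), and equivalently the average number of diagonal dots is (n−1)/3. -/

import Mathlib

/-- Second-order Eulerian numbers `A n k l`: `A 1 1 1 = 1`, zero off `(1,1)` at `n = 1`,
zero whenever `k ≤ 0` or `l ≤ 0`, and satisfying the recurrence
`A (n+1) k l = k * A n k (l-1) + l * A n (k-1) l + (2n+3-k-l) * A n (k-1) (l-1)`. -/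
def A : ℕ → ℤ → ℤ → ℤ
  | 0, _, _ => 0
  | 1, k, l => if k = 1 ∧ l = 1 then 1 else 0
  | n + 2, k, l =>
      if k ≤ 0 ∨ l ≤ 0 then 0
      else k * A (n + 1) k (l - 1) + l * A (n + 1) (k - 1) l
            + (2 * ((n : ℤ) + 1) + 3 - k - l) * A (n + 1) (k - 1) (l - 1)

/-!
Summing the recurrence against a weight `w` transfers it from `A_{n+1}` to `A_n`:
`∑ w A_{n+1} = ∑ (k w(k,l+1) + l w(k+1,l) + (2n+1-k-l) w(k+1,l+1)) A_n`.
For `w = 1` the transferred weight is the constant `2n+1`, so `∑ A_n = (2n-1)!!`; for `w = k+l`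
it is `2n(k+l) + 2(2n+1)`, so `T_{n+1} = 2n T_n + 2(2n+1)!!` for `T_n = ∑ (k+l) A_n`,
which `3 T_n = 2 (2n+1)!!` solves.
-/

open Finset

lemma A_eq_zero_of_notMem_Icc :
    ∀ (n : ℕ) (k l : ℤ), k ∉ Icc 1 (n : ℤ) ∨ l ∉ Icc 1 (n : ℤ) → A n k l = 0
  | 0, _, _, _ => rfl
  | 1, k, l, h => by
      simp only [mem_Icc, Nat.cast_one] at h
      rw [A, if_neg (by omega)]
  | n + 2, k, l, h => by
      rw [A]
      split_ifs with hkl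
      · rfl
      simp only [mem_Icc, Nat.cast_add, Nat.cast_ofNat] at h
      rw [A_eq_zero_of_notMem_Icc (n + 1) k (l - 1) (by simp; omega),
        A_eq_zero_of_notMem_Icc (n + 1) (k - 1) l (by simp; omega),
        A_eq_zero_of_notMem_Icc (n + 1) (k - 1) (l - 1) (by simp; omega)]
      simp

/-- Unlike the defining equation, this holds for all `k l : ℤ`: both sides vanish when `k ≤ 0`
or `l ≤ 0`. -/
lemma A_succ {n : ℕ} (hn : n ≠ 0) (k l : ℤ) :
    A (n + 1) k l = k * A n k (l - 1) + l * A n (k - 1) l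
      + (2 * n + 3 - k - l) * A n (k - 1) (l - 1) := by
  obtain ⟨n, rfl⟩ := Nat.exists_eq_succ_of_ne_zero hn
  rw [A]
  split_ifs with hkl
  · rw [A_eq_zero_of_notMem_Icc _ k (l - 1) (by simp; omega),
      A_eq_zero_of_notMem_Icc _ (k - 1) l (by simp; omega),
      A_eq_zero_of_notMem_Icc _ (k - 1) (l - 1) (by simp; omega)]
    ring
  · push_cast
    ring

lemma Int.sum_Icc_natCast {M : Type*} [AddCommMonoid M] (f : ℤ → M) (a b : ℕ) :
    ∑ k ∈ Icc a b, f k = ∑ k ∈ Icc (a : ℤ) b, f k :=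
  sum_nbij' (↑) Int.toNat (by simp) (fun k hk => by simp at hk ⊢; omega) (by simp)
    (fun k hk => by simp at hk; omega) (by simp)

lemma Int.sum_Icc_Icc_shift {M : Type*} [AddCommMonoid M] (F : ℤ → ℤ → M) (a b c d i j : ℤ) :
    ∑ k ∈ Icc a b, ∑ l ∈ Icc c d, F k l
      = ∑ k ∈ Icc (a - i) (b - i), ∑ l ∈ Icc (c - j) (d - j), F (k + i) (l + j) := by
  have shift (f : ℤ → M) (a b i : ℤ) : ∑ k ∈ Icc a b, f k = ∑ k ∈ Icc (a - i) (b - i), f (k + i) :=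
    sum_nbij' (· - i) (· + i) (fun k hk => by simp at hk ⊢; omega)
      (fun k hk => by simp at hk ⊢; omega) (by simp) (by simp) (by simp)
  rw [shift _ a b i]
  exact sum_congr rfl fun k _ => shift _ c d j

/-- `∑_{(k,l)} w(k,l) A_n(k,l)`; the box `[1,n]²` contains the support of `A_n`. -/
noncomputable def weightedSum (n : ℕ) (w : ℤ → ℤ → ℤ) : ℤ :=
  ∑ k ∈ Icc 1 (n : ℤ), ∑ l ∈ Icc 1 (n : ℤ), w k l * A n k l

lemma sum_Icc_Icc_eq_weightedSum {n : ℕ} (w : ℤ → ℤ → ℤ) {a b c d : ℤ}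
    (ha : a ≤ 1) (hb : n ≤ b) (hc : c ≤ 1) (hd : n ≤ d) :
    ∑ k ∈ Icc a b, ∑ l ∈ Icc c d, w k l * A n k l = weightedSum n w := by
  have vanish (k l : ℤ) (h : k ∉ Icc 1 (n : ℤ) ∨ l ∉ Icc 1 (n : ℤ)) : w k l * A n k l = 0 := by
    rw [A_eq_zero_of_notMem_Icc n k l h, mul_zero]
  symm
  refine sum_subset (Icc_subset_Icc ha hb) (fun k _ hk => sum_eq_zero fun l _ => vanish k l
    (Or.inl hk)) |>.trans (sum_congr rfl fun k _ => ?_)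
  exact sum_subset (Icc_subset_Icc hc hd) fun l _ hl => vanish k l (Or.inr hl)

lemma weightedSum_add (n : ℕ) (v w : ℤ → ℤ → ℤ) :
    weightedSum n (fun k l => v k l + w k l) = weightedSum n v + weightedSum n w := by
  simp only [weightedSum, add_mul, sum_add_distrib]

lemma weightedSum_succ {n : ℕ} (hn : n ≠ 0) (w : ℤ → ℤ → ℤ) :
    weightedSum (n + 1) w = weightedSum n fun k l =>
      k * w k (l + 1) + l * w (k + 1) l + (2 * n + 1 - k - l) * w (k + 1) (l + 1) := by
  have shifted (i j : ℤ) (v : ℤ → ℤ → ℤ) (hi : 0 ≤ i) (hi' : i ≤ 1) (hj : 0 ≤ j) (hj' : j ≤ 1) :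
      ∑ k ∈ Icc 1 (n + 1 : ℤ), ∑ l ∈ Icc 1 (n + 1 : ℤ), v (k - i) (l - j) * A n (k - i) (l - j)
        = weightedSum n v := by
    rw [Int.sum_Icc_Icc_shift _ _ _ _ _ i j]
    simp only [add_sub_cancel_right]
    exact sum_Icc_Icc_eq_weightedSum v (by omega) (by omega) (by omega) (by omega)
  rw [weightedSum_add, weightedSum_add, ← shifted 0 1 _ le_rfl zero_le_one zero_le_one le_rfl,
    ← shifted 1 0 _ zero_le_one le_rfl le_rfl zero_le_one,
    ← shifted 1 1 _ zero_le_one le_rfl zero_le_one le_rfl]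
  simp only [weightedSum, A_succ hn, sub_zero, sub_add_cancel, ← sum_add_distrib]
  push_cast
  exact sum_congr rfl fun k _ => sum_congr rfl fun l _ => by ring

lemma weightedSum_one (w : ℤ → ℤ → ℤ) : weightedSum 1 w = w 1 1 := by
  simp [weightedSum, A]

lemma weightedSum_unit_succ {n : ℕ} (hn : n ≠ 0) :
    weightedSum (n + 1) 1 = (2 * n + 1) * weightedSum n 1 := by
  rw [weightedSum_succ hn]
  simp only [weightedSum, mul_sum]
  exact sum_congr rfl fun k _ => sum_congr rfl fun l _ => by simp only [Pi.one_apply]; ring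

lemma weightedSum_halfPerimeter_succ {n : ℕ} (hn : n ≠ 0) :
    weightedSum (n + 1) (fun k l => k + l)
      = 2 * n * weightedSum n (fun k l => k + l) + 2 * (2 * n + 1) * weightedSum n 1 := by
  rw [weightedSum_succ hn]
  simp only [weightedSum, mul_sum, ← sum_add_distrib]
  exact sum_congr rfl fun k _ => sum_congr rfl fun l _ => by simp only [Pi.one_apply]; ring

lemma weightedSum_unit (n : ℕ) : weightedSum (n + 1) 1 = (2 * n + 1).doubleFactorial := by
  induction n with
  | zero => simp [weightedSum_one]
  | succ n ih =>
    rw [weightedSum_unit_succ n.succ_ne_zero, ih, show 2 * (n + 1) + 1 = 2 * n + 1 + 2 by ring,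
      Nat.doubleFactorial_add_two]
    push_cast
    ring

lemma three_mul_weightedSum_halfPerimeter (n : ℕ) :
    3 * weightedSum (n + 1) (fun k l => k + l) = 2 * (2 * n + 3).doubleFactorial := by
  induction n with
  | zero => simp [weightedSum_one]
  | succ n ih =>
    have step : ((2 * n + 3).doubleFactorial : ℤ) = (2 * n + 3) * (2 * n + 1).doubleFactorial := by
      exact_mod_cast Nat.doubleFactorial_add_two (2 * n + 1)
    rw [weightedSum_halfPerimeter_succ n.succ_ne_zero, weightedSum_unit,
      show 2 * (n + 1) + 3 = 2 * n + 3 + 2 by ring, Nat.doubleFactorial_add_two]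
    push_cast at ih ⊢
    linear_combination (2 * (n : ℤ) + 2) * ih - 6 * step

lemma weightedSum_eq_sum_natCast (n : ℕ) (w : ℤ → ℤ → ℤ) :
    weightedSum n w = ∑ k ∈ Icc 1 n, ∑ l ∈ Icc 1 n, w k l * A n k l := by
  rw [weightedSum, ← Nat.cast_one, ← Int.sum_Icc_natCast]
  exact sum_congr rfl fun k _ => (Int.sum_Icc_natCast _ 1 n).symm

/-- For every n ≥ 1, 3·∑_{(k,l)} (k+l)·A_n(k,l) = 2·(2n+1)!!
(so the average half-perimeter of a generalized tree-like tableau of size n is (2/3)(2n+1)). -/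
theorem stmt9 (n : ℕ) (hn : 1 ≤ n) :
    3 * ∑ k ∈ Finset.Icc 1 n, ∑ l ∈ Finset.Icc 1 n, ((k : ℤ) + (l : ℤ)) * A n (k : ℤ) (l : ℤ)
      = 2 * (Nat.doubleFactorial (2 * n + 1) : ℤ) := by
  obtain ⟨m, rfl⟩ := Nat.exists_eq_add_of_le' hn
  have h := three_mul_weightedSum_halfPerimeter m
  rw [weightedSum_eq_sum_natCast] at h
  rwa [show 2 * (m + 1) + 1 = 2 * m + 3 by ring]
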